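/- In B[r] the identity η_R(a_3^2 + 2a_2a_4) − (a_3^2 + 2a_2a_4) = 3a_1·(a_4r + a_3r^2 + a_2r^3 + a_1r^4) holds. -/

import Mathlib

/-!
`Bbar = 𝔽_5[a_1,a_2,a_3,a_4]` (the variable `0,1,2,3 : Fin 4` are `a_1, a_2, a_3, a_4`),
`q(t) = t^5 + a_1t^4 + a_2t^3 + a_3t^2 + a_4t`, and `etaR : Bbar → Bbar[r]` is the
𝔽_5-algebra map sending `a_i` to the coefficient of `x^{5-i}` in `q(x+r) - q(r)`,
computed in `Bbar[r][x]`.  This is the reduction modulo `(5, a_5)` of the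
Gorbounov–Hopkins–Mahowald Hopf algebroid at the prime `5`.
-/

/-- The ring `B = 𝔽_5[a_1,a_2,a_3,a_4]`. -/
abbrev Bbar : Type := MvPolynomial (Fin 4) (ZMod 5)

/-- The generator `a_1`. -/
noncomputable def a1 : Bbar := MvPolynomial.X 0
/-- The generator `a_2`. -/
noncomputable def a2 : Bbar := MvPolynomial.X 1
/-- The generator `a_3`. -/
noncomputable def a3 : Bbar := MvPolynomial.X 2
/-- The generator `a_4`. -/
noncomputable def a4 : Bbar := MvPolynomial.X 3

/-- The polynomial `q(t) = t^5 + a_1t^4 + a_2t^3 + a_3t^2 + a_4t` as an element of `B[t]`. -/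
noncomputable def q : Polynomial Bbar :=
  Polynomial.X ^ 5 + Polynomial.C a1 * Polynomial.X ^ 4 + Polynomial.C a2 * Polynomial.X ^ 3 +
    Polynomial.C a3 * Polynomial.X ^ 2 + Polynomial.C a4 * Polynomial.X

/-- `q(x+r) - q(r)`, an element of `B[r][x]` (the inner variable is `r`, the outer is `x`). -/
noncomputable def qShift : Polynomial (Polynomial Bbar) :=
  Polynomial.eval₂ (Polynomial.C.comp Polynomial.C)
      (Polynomial.X + Polynomial.C Polynomial.X) q -
    Polynomial.eval₂ (Polynomial.C.comp Polynomial.C) (Polynomial.C Polynomial.X) q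

/-- The right unit `η_R : B → B[r]`, sending `a_i` (for `i = 1,2,3,4`) to the coefficient of
`x^{5-i}` in `q(x+r) - q(r)`. -/
noncomputable def etaR : Bbar →ₐ[ZMod 5] Polynomial Bbar :=
  MvPolynomial.aeval (fun k : Fin 4 => qShift.coeff (4 - k.1))


/-!
In characteristic 5 the binomial coefficients `C(5,k)`, `0 < k < 5`, vanish, so expanding
`q(x+r) - q(r)` gives `η_R(a_2) = a_2 + 4a_1r`, `η_R(a_3) = a_3 + 3a_2r + a_1r²` and
`η_R(a_4) = a_4 + 2a_3r + 3a_2r² + 4a_1r³`. Substituting these, the claim becomes a polynomial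
identity in `a_1, …, a_4, r` that holds over `ℤ` up to a multiple of 5.
-/

open Polynomial

section CharFive

variable {R : Type*} [CommRing R]

theorem quintic_shift_sub_of_five_eq_zero (h5 : (5 : R) = 0) (a₁ a₂ a₃ a₄ x r : R) :
    ((x + r) ^ 5 + a₁ * (x + r) ^ 4 + a₂ * (x + r) ^ 3 + a₃ * (x + r) ^ 2 + a₄ * (x + r)) -
        (r ^ 5 + a₁ * r ^ 4 + a₂ * r ^ 3 + a₃ * r ^ 2 + a₄ * r) =
      x ^ 5 + a₁ * x ^ 4 + (a₂ + 4 * a₁ * r) * x ^ 3 +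
        (a₃ + 3 * a₂ * r + a₁ * r ^ 2) * x ^ 2 + (a₄ + 2 * a₃ * r + 3 * a₂ * r ^ 2 + 4 * a₁ * r ^ 3) * x := by
  linear_combination (x * r ^ 4 + 2 * x ^ 2 * r ^ 3 + 2 * x ^ 3 * r ^ 2 + x ^ 4 * r +
    a₁ * x ^ 2 * r ^ 2) * h5

theorem sq_add_two_mul_shift_sub_of_five_eq_zero (h5 : (5 : R) = 0) (a₁ a₂ a₃ a₄ r : R) :
    (a₃ + 3 * a₂ * r + a₁ * r ^ 2) ^ 2 +
        2 * (a₂ + 4 * a₁ * r) * (a₄ + 2 * a₃ * r + 3 * a₂ * r ^ 2 + 4 * a₁ * r ^ 3) -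
        (a₃ ^ 2 + 2 * a₂ * a₄) =
      3 * a₁ * (a₄ * r + a₃ * r ^ 2 + a₂ * r ^ 3 + a₁ * r ^ 4) := by
  linear_combination (2 * a₂ * a₃ * r + 3 * a₁ * a₃ * r ^ 2 + 7 * a₁ * a₂ * r ^ 3 +
    3 * a₂ ^ 2 * r ^ 2 + a₁ * a₄ * r + 6 * a₁ ^ 2 * r ^ 4) * h5

end CharFive

lemma qShift_eq : qShift =
    X ^ 5 + C (C a1) * X ^ 4 + C (C a2 + 4 * C a1 * X) * X ^ 3 +
      C (C a3 + 3 * C a2 * X + C a1 * X ^ 2) * X ^ 2 +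
      C (C a4 + 2 * C a3 * X + 3 * C a2 * X ^ 2 + 4 * C a1 * X ^ 3) * X := by
  simp only [qShift, q, eval₂_add, eval₂_mul (R := Bbar) (S := Bbar[X][X]),
    eval₂_pow (R := Bbar) (S := Bbar[X][X]), eval₂_X, eval₂_C, RingHom.coe_comp,
    Function.comp_apply, map_add, map_mul, map_pow, map_ofNat]
  exact quintic_shift_sub_of_five_eq_zero (R := Bbar[X][X]) (CharP.ofNat_eq_zero _ 5) _ _ _ _ _ _

lemma etaR_a2 : etaR a2 = C a2 + 4 * C a1 * X := by
  refine (MvPolynomial.aeval_X _ 1).trans ?_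
  rw [qShift_eq]
  simp only [coeff_add, coeff_X_pow, coeff_C_mul_X_pow, coeff_C_mul_X]
  norm_num

lemma etaR_a3 : etaR a3 = C a3 + 3 * C a2 * X + C a1 * X ^ 2 := by
  refine (MvPolynomial.aeval_X _ 2).trans ?_
  rw [qShift_eq]
  simp only [coeff_add, coeff_X_pow, coeff_C_mul_X_pow, coeff_C_mul_X]
  norm_num

lemma etaR_a4 : etaR a4 = C a4 + 2 * C a3 * X + 3 * C a2 * X ^ 2 + 4 * C a1 * X ^ 3 := by
  refine (MvPolynomial.aeval_X _ 3).trans ?_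
  rw [qShift_eq]
  simp only [coeff_add, coeff_X_pow, coeff_C_mul_X_pow, coeff_C_mul_X]
  norm_num

/-- `η_R(a_3² + 2a_2a_4) − (a_3² + 2a_2a_4) = 3a_1·(a_4r + a_3r² + a_2r³ + a_1r⁴)` in `B[r]`. -/
theorem d1_a32 :
    etaR (a3 ^ 2 + 2 * a2 * a4) - Polynomial.C (a3 ^ 2 + 2 * a2 * a4) =
      3 * Polynomial.C a1 *
        (Polynomial.C a4 * Polynomial.X + Polynomial.C a3 * Polynomial.X ^ 2 +
          Polynomial.C a2 * Polynomial.X ^ 3 + Polynomial.C a1 * Polynomial.X ^ 4) := by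
  simp only [map_add, map_mul, map_pow, map_ofNat, etaR_a2, etaR_a3, etaR_a4]
  exact sq_add_two_mul_shift_sub_of_five_eq_zero (R := Bbar[X]) (CharP.ofNat_eq_zero _ 5) _ _ _ _ _
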